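/- arXiv:2007.06215 — 10 statements merged into one kernel-verified Lean document; each statement's English description precedes it below -/
import Mathlib

section
/- Let V be a module over a semiring R, and let D ⊆ W and T be submodules of V such that T is a D-complement of W in V and D is summand absorbing in W. Then T is summand absorbing in V. -/
/-- If `T` is a `D`-complement of `W` in `V` and `D` is summand absorbing in `W`,
then `T` is summand absorbing in `V`. -/
theorem dComplement_isSA {R V : Type*} [Semiring R] [AddCommMonoid V] [Module R V]
    (D W T : Submodule R V) (hDW : D ≤ W)
    (hsum : W ⊔ T = ⊤) (hcap : W ⊓ T = D)
    (hdisj : ∀ w ∈ W, w ∉ D → ∀ t ∈ T, w + t ∉ T)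
    (hSA : ∀ w₁ ∈ W, ∀ w₂ ∈ W, w₁ + w₂ ∈ D → w₁ ∈ D ∧ w₂ ∈ D) :
    ∀ v₁ v₂ : V, v₁ + v₂ ∈ T → v₁ ∈ T ∧ v₂ ∈ T := by
  intro v₁ v₂ hv
  have h1 : v₁ ∈ W ⊔ T := by rw [hsum]; trivial
  have h2 : v₂ ∈ W ⊔ T := by rw [hsum]; trivial
  obtain ⟨w₁, hw₁, t₁, ht₁, rfl⟩ := Submodule.mem_sup.mp h1
  obtain ⟨w₂, hw₂, t₂, ht₂, rfl⟩ := Submodule.mem_sup.mp h2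
  have key : w₁ + w₂ ∈ D := by
    by_contra h
    exact hdisj _ (W.add_mem hw₁ hw₂) h _ (T.add_mem ht₁ ht₂)
      (by convert hv using 1; abel)
  -- D ≤ T since D = W ⊓ T
  have hDT : D ≤ T := by rw [← hcap]; exact inf_le_right
  obtain ⟨hd₁, hd₂⟩ := hSA _ hw₁ _ hw₂ key
  exact ⟨T.add_mem (hDT hd₁) ht₁, T.add_mem (hDT hd₂) ht₂⟩
end

section
/- Let V be a module over a semiring R and D ⊆ W submodules with D summand absorbing in W. If T and U are both D-complements of W in V, then T = U. -/
private lemma dComplement_le_aux {R V : Type*} [Semiring R] [AddCommMonoid V] [Module R V]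
    (D W T U : Submodule R V)
    (hSA : ∀ w₁ ∈ W, ∀ w₂ ∈ W, w₁ + w₂ ∈ D → w₁ ∈ D ∧ w₂ ∈ D)
    (hTsum : W ⊔ T = ⊤)
    (hTdisj : ∀ w ∈ W, w ∉ D → ∀ t ∈ T, w + t ∉ T)
    (hUsum : W ⊔ U = ⊤) (hDU : D ≤ U) : T ≤ U := by
  intro t ht
  have h1 : t ∈ W ⊔ U := by rw [hUsum]; trivial
  obtain ⟨w, hw, u, hu, rfl⟩ := Submodule.mem_sup.mp h1
  have h2 : u ∈ W ⊔ T := by rw [hTsum]; trivial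
  obtain ⟨w', hw', t', ht', rfl⟩ := Submodule.mem_sup.mp h2
  have hD : w + w' ∈ D := by
    by_contra hnd
    exact hTdisj (w + w') (W.add_mem hw hw') hnd t' ht' (by rw [add_assoc]; exact ht)
  have := hSA w hw w' hw' hD
  exact U.add_mem (hDU this.1) hu

/-- Uniqueness of `D`-complements: if `D` is summand absorbing in `W` and
`T`, `U` are both `D`-complements of `W` in `V`, then `T = U`. -/
theorem dComplement_unique {R V : Type*} [Semiring R] [AddCommMonoid V] [Module R V]
    (D W T U : Submodule R V) (hDW : D ≤ W)
    (hSA : ∀ w₁ ∈ W, ∀ w₂ ∈ W, w₁ + w₂ ∈ D → w₁ ∈ D ∧ w₂ ∈ D)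
    (hTsum : W ⊔ T = ⊤) (hTcap : W ⊓ T = D)
    (hTdisj : ∀ w ∈ W, w ∉ D → ∀ t ∈ T, w + t ∉ T)
    (hUsum : W ⊔ U = ⊤) (hUcap : W ⊓ U = D)
    (hUdisj : ∀ w ∈ W, w ∉ D → ∀ u ∈ U, w + u ∉ U) :
    T = U := by
  have hDU : D ≤ U := hUcap ▸ inf_le_right
  have hDT : D ≤ T := hTcap ▸ inf_le_right
  exact le_antisymm
    (dComplement_le_aux D W T U hSA hTsum hTdisj hUsum hDU)
    (dComplement_le_aux D W U T hSA hUsum hUdisj hTsum hDT)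
end

section
/- Let V be a module over a semiring R, D a submodule of V, and T the subtractive hull of D in V. Then for every summand absorbing extension A of D (i.e., every submodule A ⊇ D such that D is summand absorbing in A), T is complementary to A over D, that is, A ∩ T = D and ((A \ D) + T) ∩ T = ∅. -/
/-- The subtractive hull `T` of `D` is complementary over `D` to every
summand absorbing extension `A` of `D`: `A ∩ T = D` and `((A \ D) + T) ∩ T = ∅`. -/
theorem subtractive_hull_complementary {R V : Type*} [Semiring R] [AddCommMonoid V] [Module R V]
    (D A : Submodule R V) (hDA : D ≤ A)
    (hSA : ∀ a₁ ∈ A, ∀ a₂ ∈ A, a₁ + a₂ ∈ D → a₁ ∈ D ∧ a₂ ∈ D) :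
    (A : Set V) ∩ {x : V | ∃ d ∈ D, ∃ d' ∈ D, x + d = d'} = (D : Set V) ∧
    ∀ a ∈ A, a ∉ D → ∀ t ∈ {x : V | ∃ d ∈ D, ∃ d' ∈ D, x + d = d'},
      a + t ∉ {x : V | ∃ d ∈ D, ∃ d' ∈ D, x + d = d'} := by
  constructor
  · ext x
    constructor
    · rintro ⟨hxA, d, hd, d', hd', hx⟩
      exact (hSA x hxA d (hDA hd) (hx ▸ hd')).1
    · intro hx
      exact ⟨hDA hx, 0, D.zero_mem, x, hx, add_zero x⟩
  · rintro a haA haD t ⟨d₁, hd₁, d₁', hd₁', ht⟩ ⟨d₂, hd₂, d₂', hd₂', hat⟩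
    have key : a + (d₁' + d₂) = d₂' + d₁ := by
      rw [← ht, ← hat]; abel
    have hmem : a + (d₁' + d₂) ∈ D := key ▸ D.add_mem hd₂' hd₁
    exact haD (hSA a haA (d₁' + d₂) (hDA (D.add_mem hd₁' hd₂)) hmem).1
end

section
/- Let R be a zerosumfree semifield (a semiring in which every nonzero element is invertible and a + b = 0 implies a = b = 0), V an R-module, D a submodule, T the subtractive hull of D in V, and x ∈ V \ T. Then the submodule A := D + Rx is a summand-absorbing extension of D, i.e., D is summand absorbing in A. -/
/-- Over a zerosumfree semifield, for `x` outside the subtractive hull of `D`,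
the submodule `A = D + Rx` is a summand absorbing extension of `D`. -/
theorem sa_extension_span {R V : Type*} [Semiring R] [AddCommMonoid V] [Module R V]
    (hunit : ∀ a : R, a ≠ 0 → IsUnit a)
    (hzsf : ∀ a b : R, a + b = 0 → a = 0 ∧ b = 0)
    (D : Submodule R V) (x : V)
    (hx : x ∉ {v : V | ∃ d ∈ D, ∃ d' ∈ D, v + d = d'}) :
    ∀ a₁ ∈ D ⊔ Submodule.span R {x}, ∀ a₂ ∈ D ⊔ Submodule.span R {x},
      a₁ + a₂ ∈ D → a₁ ∈ D ∧ a₂ ∈ D := by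
  intro a₁ h₁ a₂ h₂ hsum
  rw [Submodule.mem_sup] at h₁ h₂
  obtain ⟨d₁, hd₁, y₁, hy₁, rfl⟩ := h₁
  obtain ⟨d₂, hd₂, y₂, hy₂, rfl⟩ := h₂
  rw [Submodule.mem_span_singleton] at hy₁ hy₂
  obtain ⟨c₁, rfl⟩ := hy₁
  obtain ⟨c₂, rfl⟩ := hy₂
  have hc : c₁ + c₂ = 0 := by
    by_contra hc
    obtain ⟨u, hu⟩ := hunit _ hc
    apply hx
    refine ⟨(↑u⁻¹ : R) • (d₁ + d₂), Submodule.smul_mem _ _ (D.add_mem hd₁ hd₂),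
      (↑u⁻¹ : R) • (d₁ + c₁ • x + (d₂ + c₂ • x)), Submodule.smul_mem _ _ hsum, ?_⟩
    have : d₁ + c₁ • x + (d₂ + c₂ • x) = (c₁ + c₂) • x + (d₁ + d₂) := by
      rw [add_smul]; abel
    rw [this, ← hu, smul_add, smul_add, smul_smul, Units.inv_mul, one_smul, smul_add]
  obtain ⟨h1, h2⟩ := hzsf _ _ hc
  subst h1; subst h2
  simp only [zero_smul, add_zero] at hsum ⊢
  exact ⟨hd₁, hd₂⟩
end

section
/- Let V be a module over a semiring R and D a submodule such that the relation x ≤_D y ⟺ (∃ d ∈ D, x + d = y) is antisymmetric (V is D-ordered). Let U ⊇ D be a submodule of V. Then a coset x + D (for x ∈ U) is minimal (i.e., there is no y ∈ U with y + D ⊊ x + D) if and only if x + d = x for every d ∈ D, in which case x + D = {x}. -/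
/-- In a `D`-ordered module, for `x` in a submodule `U ⊇ D`, the coset `x + D`
is minimal (no coset `y + D` with `y ∈ U` is strictly contained in it) iff
`x + d = x` for every `d ∈ D`; and in that case `x + D = {x}`. -/
theorem minimal_coset_iff_fixed {R V : Type*} [Semiring R] [AddCommMonoid V] [Module R V]
    (D U : Submodule R V)
    (hord : ∀ x y : V, (∃ d ∈ D, x + d = y) → (∃ d ∈ D, y + d = x) → x = y)
    (hDU : D ≤ U) (x : V) (hx : x ∈ U) :
    ((¬ ∃ y ∈ U, {v : V | ∃ d ∈ D, v = y + d} ⊂ {v : V | ∃ d ∈ D, v = x + d}) ↔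
      (∀ d ∈ D, x + d = x)) ∧
    ((∀ d ∈ D, x + d = x) → {v : V | ∃ d ∈ D, v = x + d} = {x}) := by
  have sing : (∀ d ∈ D, x + d = x) → {v : V | ∃ d ∈ D, v = x + d} = {x} := by
    intro h
    ext v
    simp only [Set.mem_setOf_eq, Set.mem_singleton_iff]
    constructor
    · rintro ⟨d, hd, rfl⟩; exact h d hd
    · intro hv; exact ⟨0, D.zero_mem, by rw [hv, add_zero]⟩
  refine ⟨⟨?_, ?_⟩, sing⟩
  · intro hmin d hd
    by_contra hne
    apply hmin
    refine ⟨x + d, U.add_mem hx (hDU hd), ?_, ?_⟩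
    · rintro v ⟨d', hd', rfl⟩
      exact ⟨d + d', D.add_mem hd hd', add_assoc x d d'⟩
    · intro hsub
      have hxmem : x ∈ {v : V | ∃ e ∈ D, v = x + e} := ⟨0, D.zero_mem, (add_zero x).symm⟩
      obtain ⟨d', hd', hx'⟩ := hsub hxmem
      exact hne (hord x (x + d) ⟨d, hd, rfl⟩ ⟨d', hd', hx'.symm⟩).symm
  · intro h ⟨y, hy, hss⟩
    have hy0 : y ∈ {v : V | ∃ d ∈ D, v = y + d} := ⟨0, D.zero_mem, (add_zero y).symm⟩
    have := hss.1 hy0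
    rw [sing h] at this
    apply hss.2
    rw [sing h]
    rw [Set.mem_singleton_iff] at this
    intro v hv
    rw [Set.mem_singleton_iff] at hv
    rw [hv, ← this]
    exact hy0
end

section
/- Let V be a module over a semiring R, D a submodule, X ⊆ V a set stable under D (i.e., X + D ⊆ X), and x ∈ X with x + d = x for all d ∈ D. Then x + D↓ = {x}, where D↓ = {v ∈ V : ∃ d₁, d₂ ∈ D, v + d₁ = d₂} is the subtractive hull of D. -/
/-- If `X` is stable under `D` and `x ∈ X` is a fixed point of all translations
by `D`, then `x + D↓ = {x}`, where `D↓` is the subtractive hull of `D`. -/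
theorem fixed_point_coset_subtractive_hull {R V : Type*} [Semiring R] [AddCommMonoid V]
    [Module R V] (D : Submodule R V) (X : Set V)
    (hstable : ∀ x ∈ X, ∀ d ∈ D, x + d ∈ X)
    (x : V) (hx : x ∈ X) (hfix : ∀ d ∈ D, x + d = x) :
    {v : V | ∃ t ∈ {u : V | ∃ d₁ ∈ D, ∃ d₂ ∈ D, u + d₁ = d₂}, v = x + t} = {x} := by
  ext v
  constructor
  · rintro ⟨t, ⟨d₁, hd₁, d₂, hd₂, ht⟩, rfl⟩
    have : x + t = (x + d₁) + t := by rw [hfix d₁ hd₁]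
    simp only [Set.mem_singleton_iff]
    rw [this, add_assoc, add_comm d₁ t, ht, hfix d₂ hd₂]
  · rintro rfl
    exact ⟨0, ⟨0, D.zero_mem, 0, D.zero_mem, by simp⟩, by simp⟩
end

section
/- Let V be a module over a semiring R and D a submodule such that for each v, the coset v + D↓ (where D↓ is the subtractive hull of D) satisfies: if v + D↓ is minimal as a D↓-coset, and u₁ + D, u₂ + D are minimal D-cosets contained in v + D↓, then u₁ + D = u₂ + D. (Uniqueness of minimal D-cosets in a minimal D↓-coset.) -/
/-- In a minimal `D↓`-coset there is at most one minimal `D`-coset: if `v + D↓`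
is a minimal `D↓`-coset and `u₁ + D`, `u₂ + D` are minimal `D`-cosets contained
in `v + D↓`, then `u₁ + D = u₂ + D`. -/
theorem unique_minimal_coset {R V : Type*} [Semiring R] [AddCommMonoid V] [Module R V]
    (D : Submodule R V) (v u₁ u₂ : V) :
    let Ddown : Set V := {x : V | ∃ d ∈ D, ∃ d' ∈ D, x + d = d'}
    let cosetE : V → Set V := fun a => {w : V | ∃ t ∈ Ddown, w = a + t}
    let cosetD : V → Set V := fun a => {w : V | ∃ d ∈ D, w = a + d}
    (∀ w : V, cosetE w ⊆ cosetE v → cosetE w = cosetE v) →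
    (∀ w : V, cosetD w ⊆ cosetD u₁ → cosetD w = cosetD u₁) →
    (∀ w : V, cosetD w ⊆ cosetD u₂ → cosetD w = cosetD u₂) →
    cosetD u₁ ⊆ cosetE v → cosetD u₂ ⊆ cosetE v →
    cosetD u₁ = cosetD u₂ := by
  intro Ddown cosetE cosetD _hEmin h1min h2min hsub1 hsub2
  have hu1mem : u₁ ∈ cosetE v := hsub1 ⟨0, D.zero_mem, (add_zero u₁).symm⟩
  have hu2mem : u₂ ∈ cosetE v := hsub2 ⟨0, D.zero_mem, (add_zero u₂).symm⟩
  obtain ⟨t₁, ⟨d₁, hd₁, d₁', hd₁', ht₁⟩, hu₁⟩ := hu1mem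
  obtain ⟨t₂, ⟨d₂, hd₂, d₂', hd₂', ht₂⟩, hu₂⟩ := hu2mem
  have key : ∀ (u t d d' : V), d ∈ D → d' ∈ D → t + d = d' → u = v + t →
      (∀ w : V, cosetD w ⊆ cosetD u → cosetD w = cosetD u) →
      cosetD (v + d') = cosetD u := by
    intro u t d d' hd _hd' htd hu hmin
    have heq : v + d' = u + d := by rw [hu, add_assoc, htd]
    refine hmin _ ?_
    rintro w ⟨e, he, rfl⟩
    exact ⟨d + e, D.add_mem hd he, by rw [heq, add_assoc]⟩
  have k1 := key u₁ t₁ d₁ d₁' hd₁ hd₁' ht₁ hu₁ h1min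
  have k2 := key u₂ t₂ d₂ d₂' hd₂ hd₂' ht₂ hu₂ h2min
  have hsub12 : cosetD (v + d₁' + d₂') ⊆ cosetD (v + d₁') := by
    rintro w ⟨e, he, rfl⟩
    exact ⟨d₂' + e, D.add_mem hd₂' he, by rw [add_assoc]⟩
  have hsub21 : cosetD (v + d₁' + d₂') ⊆ cosetD (v + d₂') := by
    rintro w ⟨e, he, rfl⟩
    refine ⟨d₁' + e, D.add_mem hd₁' he, ?_⟩
    abel
  have e1 : cosetD (v + d₁' + d₂') = cosetD u₁ := h1min _ (k1 ▸ hsub12)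
  have e2 : cosetD (v + d₁' + d₂') = cosetD u₂ := h2min _ (k2 ▸ hsub21)
  rw [← e1, e2]
end

section
/- Let (V, +) and (X, +) be additive commutative monoids with X upper bound (the quasiordering x ≤_X y ⟺ ∃ z, x + z = y is a partial order), and let α: V × X → X be an action of V on X (writing u +_α x for α(u, x)): u +_α (x₁ + x₂) = (u +_α x₁) + x₂, (u₁ + u₂) +_α x = u₁ +_α (u₂ +_α x), and 0 +_α x = x. Then for every s ∈ X, the set C_α(s) := {u ∈ V : u +_α s = s} is a summand absorbing submonoid of V. -/
/-- For an action `α` of a monoid `V` on an upper bound monoid `X`, each set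
`C_α(s) = {u : u +_α s = s}` is a summand absorbing submonoid of `V`. -/
theorem action_fixers_sa {V X : Type*} [AddCommMonoid V] [AddCommMonoid X]
    (hub : ∀ x y : X, (∃ z : X, x + z = y) → (∃ w : X, y + w = x) → x = y)
    (α : V → X → X)
    (hdist : ∀ u : V, ∀ x₁ x₂ : X, α u (x₁ + x₂) = α u x₁ + x₂)
    (hadd : ∀ u₁ u₂ : V, ∀ x : X, α (u₁ + u₂) x = α u₁ (α u₂ x))
    (hzero : ∀ x : X, α 0 x = x) (s : X) :
    α 0 s = s ∧
    (∀ u₁ u₂ : V, α u₁ s = s → α u₂ s = s → α (u₁ + u₂) s = s) ∧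
    (∀ u₁ u₂ : V, α (u₁ + u₂) s = s → α u₁ s = s ∧ α u₂ s = s) := by
  have key : ∀ (u : V) (x : X), α u x = x + α u 0 := by
    intro u x
    calc α u x = α u (0 + x) := by rw [zero_add]
    _ = α u 0 + x := hdist u 0 x
    _ = x + α u 0 := add_comm _ _
  refine ⟨hzero s, fun u₁ u₂ h₁ h₂ => by rw [hadd, h₂, h₁], fun u₁ u₂ h => ?_⟩
  have h' : s + (α u₂ 0 + α u₁ 0) = s := by
    have := h
    rw [hadd, key u₂ s, key u₁ (s + α u₂ 0)] at this
    rwa [add_assoc] at this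
  constructor
  · rw [key]
    refine (hub s (s + α u₁ 0) ⟨α u₁ 0, rfl⟩ ⟨α u₂ 0, ?_⟩).symm
    rw [add_assoc, add_comm (α u₁ 0), h']
  · rw [key]
    refine (hub s (s + α u₂ 0) ⟨α u₂ 0, rfl⟩ ⟨α u₁ 0, ?_⟩).symm
    rw [add_assoc, h']
end

section
/- Let V be a module over a semiring R, and α an action of V on an upper bound R-module X. For any x ∈ X, the set R_x := {λ ∈ R : λ · C(x) ⊆ C(x)}, where C(x) = {u ∈ V : u +_α x = x}, is a subsemiring of R which is convex with respect to the quasiordering λ ≤_R μ ⟺ ∃ ν, λ + ν = μ. -/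
/-- For an action `α` of an `R`-module `V` on an upper bound `R`-module `X`,
the set `R_x = {lam : lam • C(x) ⊆ C(x)}` is a subsemiring of `R`, convex with
respect to the quasiordering of `R`. -/
theorem fixer_semiring_convex {R V X : Type*} [Semiring R]
    [AddCommMonoid V] [Module R V] [AddCommMonoid X] [Module R X]
    (hub : ∀ x y : X, (∃ z : X, x + z = y) → (∃ w : X, y + w = x) → x = y)
    (α : V → X → X)
    (hdist : ∀ u : V, ∀ x₁ x₂ : X, α u (x₁ + x₂) = α u x₁ + x₂)
    (hadd : ∀ u₁ u₂ : V, ∀ x : X, α (u₁ + u₂) x = α u₁ (α u₂ x))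
    (hzero : ∀ x : X, α 0 x = x) (x : X) :
    let C : Set V := {u : V | α u x = x}
    let Rx : Set R := {lam : R | ∀ u ∈ C, lam • u ∈ C}
    (0 : R) ∈ Rx ∧ (1 : R) ∈ Rx ∧
    (∀ a ∈ Rx, ∀ b ∈ Rx, a + b ∈ Rx) ∧
    (∀ a ∈ Rx, ∀ b ∈ Rx, a * b ∈ Rx) ∧
    (∀ a ∈ Rx, ∀ b ∈ Rx, ∀ lam : R,
      (∃ m : R, a + m = lam) → (∃ n : R, lam + n = b) → lam ∈ Rx) := by
  intro C Rx
  -- key: y ≤ α v y for all v, y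
  have hle : ∀ (v : V) (y : X), α v y = y + α v 0 := by
    intro v y
    have := hdist v 0 y
    rw [zero_add] at this
    rw [this, add_comm]
  refine ⟨?_, ?_, ?_, ?_, ?_⟩
  · intro u _; simp only [C, Set.mem_setOf_eq, zero_smul]; exact hzero x
  · intro u hu; simpa [C] using hu
  · intro a ha b hb u hu
    have ha' := ha u hu
    have hb' := hb u hu
    simp only [C, Set.mem_setOf_eq] at *
    rw [add_smul, hadd, hb', ha']
  · intro a ha b hb u hu
    have := ha _ (hb u hu)
    simpa [C, mul_smul] using this
  · rintro a ha b hb lam ⟨m, hm⟩ ⟨n, hn⟩ u hu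
    have ha' : α (a • u) x = x := ha u hu
    have hb' : α (b • u) x = x := hb u hu
    have hy : α (lam • u) x = α (m • u) x := by
      rw [← hm, add_comm a m, add_smul, hadd, ha']
    have hx : α (n • u) (α (m • u) x) = x := by
      conv_lhs => rw [← ha']
      rw [← hadd, ← hadd, ← add_smul, ← add_smul]
      have hnma : n + m + a = b := by
        rw [← hn, ← hm]; simp [add_comm, add_left_comm, add_assoc]
      rw [hnma, hb']
    have : α (m • u) x = x := by
      apply hub
      · exact ⟨α (n • u) 0, by rw [← hle, hx]⟩
      · exact ⟨α (m • u) 0, (hle (m • u) x).symm⟩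
    show α (lam • u) x = x
    rw [hy, this]
end

section
/- Let V be an additive commutative monoid with algebraic quasiordering x ≤ y ⟺ ∃ z, x + z = y. For x ∈ V define C̄(x) := {u ∈ V : u + x ≤ x}. Then: (a) C̄(x) is a summand absorbing submonoid of V (u₁ + u₂ ∈ C̄(x) iff u₁ ∈ C̄(x) and u₂ ∈ C̄(x)); (b) if x ≤ x' then C̄(x) ⊆ C̄(x'); (c) consequently C̄_ω(x) := ⋃_{n ∈ ℕ} C̄(n·x) is also a summand absorbing submonoid of V, and if Arch(x) = Arch(y) then C̄_ω(x) = C̄_ω(y), where Arch(x) = {y : ∃ n m ∈ ℕ, x ≤ n·y ∧ y ≤ m·x}. -/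
/-- Properties of `C̄(x) = {u : u + x ≤ x}` in an additive commutative monoid:
it is a summand absorbing submonoid, monotone in `x`, and the union
`C̄_ω(x) = ⋃ₙ C̄(n•x)` is a summand absorbing submonoid depending only on the
archimedean class of `x`. -/
theorem cbar_properties {V : Type*} [AddCommMonoid V] :
    let le : V → V → Prop := fun a b => ∃ z : V, a + z = b
    let Cbar : V → Set V := fun x => {u : V | le (u + x) x}
    let Comega : V → Set V := fun x => {u : V | ∃ n : ℕ, 0 < n ∧ u ∈ Cbar (n • x)}
    let Arch : V → Set V := fun x =>
      {y : V | ∃ n m : ℕ, 0 < n ∧ 0 < m ∧ le x (n • y) ∧ le y (m • x)}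
    (∀ x : V, (0 : V) ∈ Cbar x) ∧
    (∀ x u₁ u₂ : V, (u₁ + u₂ ∈ Cbar x ↔ u₁ ∈ Cbar x ∧ u₂ ∈ Cbar x)) ∧
    (∀ x x' : V, le x x' → Cbar x ⊆ Cbar x') ∧
    (∀ x : V, (0 : V) ∈ Comega x) ∧
    (∀ x u₁ u₂ : V, (u₁ + u₂ ∈ Comega x ↔ u₁ ∈ Comega x ∧ u₂ ∈ Comega x)) ∧
    (∀ x y : V, Arch x = Arch y → Comega x = Comega y) := by
  intro le Cbar Comega Arch
  -- basic facts about Cbar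
  have hzero : ∀ x : V, (0 : V) ∈ Cbar x := fun x => ⟨0, by simp⟩
  have hiff : ∀ x u₁ u₂ : V, u₁ + u₂ ∈ Cbar x ↔ u₁ ∈ Cbar x ∧ u₂ ∈ Cbar x := by
    intro x u₁ u₂
    constructor
    · rintro ⟨z, hz⟩
      constructor
      · exact ⟨u₂ + z, by rw [show u₁ + x + (u₂ + z) = u₁ + u₂ + x + z by abel, hz]⟩
      · exact ⟨u₁ + z, by rw [show u₂ + x + (u₁ + z) = u₁ + u₂ + x + z by abel, hz]⟩
    · rintro ⟨⟨z₁, hz₁⟩, ⟨z₂, hz₂⟩⟩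
      refine ⟨z₂ + z₁, ?_⟩
      calc u₁ + u₂ + x + (z₂ + z₁) = u₁ + (u₂ + x + z₂) + z₁ := by abel
        _ = u₁ + x + z₁ := by rw [hz₂]
        _ = x := hz₁
  have hmono : ∀ x x' : V, le x x' → Cbar x ⊆ Cbar x' := by
    rintro x x' ⟨w, hw⟩ u ⟨z, hz⟩
    refine ⟨z, ?_⟩
    calc u + x' + z = (u + x + z) + w := by rw [← hw]; abel
      _ = x + w := by rw [hz]
      _ = x' := hw
  have hsmul : ∀ (k : ℕ) (a b : V), le a b → le (k • a) (k • b) := by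
    rintro k a b ⟨z, hz⟩
    exact ⟨k • z, by rw [← smul_add, hz]⟩
  have hmonoN : ∀ (x : V) (n m : ℕ), n ≤ m → Cbar (n • x) ⊆ Cbar (m • x) := by
    intro x n m hnm
    apply hmono
    exact ⟨(m - n) • x, by rw [← add_nsmul, Nat.add_sub_cancel' hnm]⟩
  have hComega : ∀ x u₁ u₂ : V, u₁ + u₂ ∈ Comega x ↔ u₁ ∈ Comega x ∧ u₂ ∈ Comega x := by
    intro x u₁ u₂
    constructor
    · rintro ⟨n, hn, hu⟩
      obtain ⟨h1, h2⟩ := (hiff (n • x) u₁ u₂).1 hu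
      exact ⟨⟨n, hn, h1⟩, ⟨n, hn, h2⟩⟩
    · rintro ⟨⟨n₁, hn₁, h1⟩, ⟨n₂, hn₂, h2⟩⟩
      refine ⟨n₁ + n₂, by omega, (hiff _ _ _).2 ⟨?_, ?_⟩⟩
      · exact hmonoN x n₁ (n₁ + n₂) (Nat.le_add_right _ _) h1
      · exact hmonoN x n₂ (n₁ + n₂) (Nat.le_add_left _ _) h2
  -- Comega only depends on upward bounds: if x ≤ n•y then Comega x ⊆ Comega y
  have hsub : ∀ (x y : V) (n : ℕ), 0 < n → le x (n • y) → Comega x ⊆ Comega y := by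
    rintro x y n hn hxy u ⟨k, hk, hu⟩
    refine ⟨k * n, by positivity, ?_⟩
    rw [mul_smul]
    exact hmono _ _ (hsmul k _ _ hxy) hu
  refine ⟨hzero, hiff, hmono, fun x => ⟨1, one_pos, hzero _⟩, hComega, ?_⟩
  intro x y hA
  have hy : y ∈ Arch x := by
    rw [hA]; exact ⟨1, 1, one_pos, one_pos, ⟨0, by simp⟩, ⟨0, by simp⟩⟩
  obtain ⟨n, m, hn, hm, hxy, hyx⟩ := hy
  exact Set.Subset.antisymm (hsub x y n hn hxy) (hsub y x m hm hyx)
end
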